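/- Let g ∈ SL(2,ℝ) have a real eigenvalue λ < -1, written g = h · diag(λ, 1/λ) · h⁻¹, and let a ∈ SL(2,ℝ) be such that the (1,1)-entry of h⁻¹ a h is nonzero. Then there exists N such that for all n ≥ N, both g^{2n} a and g^{2n+1} a have a unique real eigenvalue of maximal modulus, and these two maximal eigenvalues have opposite signs. In particular, for some m the matrix g^m a has a negative eigenvalue of maximal modulus. -/

import Mathlib

open Matrix Polynomial

/-- The multiset of complex eigenvalues (with algebraic multiplicity) of a real matrix. -/
noncomputable def specC {n : Type*} [Fintype n] [DecidableEq n]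
    (A : Matrix n n ℝ) : Multiset ℂ :=
  ((A.map (algebraMap ℝ ℂ)).charpoly).roots

/-- The moduli of the eigenvalues of `A`, sorted in decreasing order. -/
noncomputable def ellList {n : Type*} [Fintype n] [DecidableEq n]
    (A : Matrix n n ℝ) : List ℝ :=
  ((specC A).map (fun z : ℂ => ‖z‖)).sort (· ≥ ·)

/-- `ell A i` is `ℓ_i(A)`, the `i`-th largest modulus of an eigenvalue of `A` (1-based). -/
noncomputable def ell {n : Type*} [Fintype n] [DecidableEq n]
    (A : Matrix n n ℝ) (i : ℕ) : ℝ :=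
  (ellList A).getD (i - 1) 0

/-- The singular values of `g`, i.e. the square roots of the eigenvalues of `g * gᴴ`,
sorted in decreasing order. -/
noncomputable def svalList {n : Type*} [Fintype n] [DecidableEq n]
    (g : Matrix n n ℝ) : List ℝ :=
  (Finset.univ.val.map fun i =>
    Real.sqrt ((Matrix.isHermitian_mul_conjTranspose_self g).eigenvalues i)).sort (· ≥ ·)

/-- `sval g i` is `σ_i(g)`, the `i`-th largest singular value of `g` (1-based). -/
noncomputable def sval {n : Type*} [Fintype n] [DecidableEq n]
    (g : Matrix n n ℝ) (i : ℕ) : ℝ :=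
  (svalList g).getD (i - 1) 0

/-- The multiset of eigenvalues of the `i`-th exterior power `∧^i A`: products of the
eigenvalues of `A` over `i`-element sub-multisets. -/
noncomputable def wedgeSpec {n : Type*} [Fintype n] [DecidableEq n]
    (i : ℕ) (A : Matrix n n ℝ) : Multiset ℂ :=
  ((specC A).powersetCard i).map Multiset.prod


/-- `L` is the unique eigenvalue of maximal modulus of `A`, and it is real. -/
def IsTopEig {n : Type*} [Fintype n] [DecidableEq n] (A : Matrix n n ℝ) (L : ℝ) : Prop :=
  (L : ℂ) ∈ specC A ∧ ∀ z ∈ specC A, z ≠ (L : ℂ) → ‖z‖ < |L|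

lemma charpoly_fin_two' (M : Matrix (Fin 2) (Fin 2) ℝ) :
    M.charpoly = X ^ 2 - C M.trace * X + C M.det := by
  rw [Matrix.charpoly, Matrix.det_fin_two]
  simp only [Matrix.charmatrix_apply_eq, Matrix.charmatrix_apply_ne _ _ _ (show (0:Fin 2) ≠ 1 by decide),
    Matrix.charmatrix_apply_ne _ _ _ (show (1:Fin 2) ≠ 0 by decide),
    Matrix.trace_fin_two, Matrix.det_fin_two, Polynomial.C_add, Polynomial.C_sub, Polynomial.C_mul]
  ring

lemma sign_mul_lemma (a b x y : ℝ) (h1 : 0 < a * x) (h2 : 0 < b * y) (h3 : x * y < 0) :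
    a * b < 0 := by
  by_contra hc
  push_neg at hc
  nlinarith [mul_pos h1 h2]

lemma sign_trace_lemma (u e : ℝ) (h : 2 + |e| < |u|) :
    2 < |u + e| ∧ 0 < (u + e) * u := by
  have h1 : |u| ≤ |u + e| + |e| := by
    calc |u| = |(u + e) + (-e)| := by ring_nf
    _ ≤ |u + e| + |-e| := abs_add_le _ _
    _ = |u + e| + |e| := by rw [abs_neg]
  constructor
  · linarith [abs_nonneg e]
  · nlinarith [neg_abs_le (e * u), abs_mul e u, sq_abs u, abs_nonneg e, abs_nonneg u,
      le_abs_self (e*u)]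

lemma core (M : Matrix (Fin 2) (Fin 2) ℝ) (hdet : M.det = 1) (ht : 2 < |M.trace|) :
    ∃ L : ℝ, IsTopEig M L ∧ 0 < L * M.trace := by
  set t := M.trace with htdef
  have ht2 : 4 < t ^ 2 := by nlinarith [sq_abs t, abs_nonneg t]
  set s := Real.sqrt (t ^ 2 - 4) with hsdef
  have hs : s ^ 2 = t ^ 2 - 4 := Real.sq_sqrt (by linarith)
  have hs0 : 0 < s := Real.sqrt_pos.2 (by linarith)
  set r₁ := (t + s) / 2 with hr1
  set r₂ := (t - s) / 2 with hr2
  have hsum : r₁ + r₂ = t := by rw [hr1, hr2]; ring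
  have hprod : r₁ * r₂ = 1 := by rw [hr1, hr2]; nlinarith [hs]
  have hspec : specC M = {(r₁ : ℂ), (r₂ : ℂ)} := by
    rw [specC, Matrix.charpoly_map, charpoly_fin_two', hdet]
    have hfac : (X ^ 2 - C t * X + C 1 : ℝ[X]).map (algebraMap ℝ ℂ) =
        (X - C (r₁ : ℂ)) * (X - C (r₂ : ℂ)) := by
      have h1 : (t : ℂ) = (r₁ : ℂ) + (r₂ : ℂ) := by exact_mod_cast congrArg (Complex.ofReal) hsum.symm
      have h2 : (1 : ℂ) = (r₁ : ℂ) * (r₂ : ℂ) := by exact_mod_cast congrArg (Complex.ofReal) hprod.symm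
      simp only [Polynomial.map_add, Polynomial.map_sub, Polynomial.map_mul,
        Polynomial.map_pow, Polynomial.map_X, Polynomial.map_C]
      rw [show ((algebraMap ℝ ℂ) t : ℂ) = (t : ℂ) from rfl,
        show ((algebraMap ℝ ℂ) 1 : ℂ) = (1 : ℂ) from by simp, h1, h2, Polynomial.C_add, Polynomial.C_mul]
      ring
    rw [hfac, Polynomial.roots_mul (by
      apply mul_ne_zero <;> exact Polynomial.X_sub_C_ne_zero _),
      Polynomial.roots_X_sub_C, Polynomial.roots_X_sub_C]
    rfl
  have habs : ∀ z ∈ specC M, z = (r₁ : ℂ) ∨ z = (r₂ : ℂ) := by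
    intro z hz
    rw [hspec] at hz
    simpa using hz
  rcases lt_or_ge 0 t with htpos | htneg
  · -- t > 2, top eigenvalue r₁
    have ht2' : 2 < t := by rwa [abs_of_pos htpos] at ht
    have hr1gt : 1 < r₁ := by rw [hr1]; nlinarith
    have hr2pos : 0 < r₂ := by nlinarith
    have hr2lt : r₂ < 1 := by nlinarith
    refine ⟨r₁, ⟨?_, ?_⟩, by nlinarith⟩
    · rw [hspec]; simp
    · intro z hz hne
      rcases habs z hz with h | h
      · exact absurd h hne
      · rw [h, Complex.norm_real, Real.norm_eq_abs, abs_of_pos hr2pos, abs_of_pos (by linarith : (0:ℝ) < r₁)]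
        linarith
  · -- t < -2, top eigenvalue r₂
    have ht2' : t < -2 := by
      rcases abs_cases t with ⟨h1, h2⟩ | ⟨h1, h2⟩ <;> linarith
    have hr2lt : r₂ < -1 := by rw [hr2]; nlinarith
    have hr1neg : r₁ < 0 := by nlinarith
    have hr1gt : -1 < r₁ := by nlinarith
    refine ⟨r₂, ⟨?_, ?_⟩, by nlinarith⟩
    · rw [hspec]; simp
    · intro z hz hne
      rcases habs z hz with h | h
      · rw [h, Complex.norm_real, Real.norm_eq_abs, abs_of_neg hr1neg, abs_of_neg (by linarith : r₂ < 0)]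
        linarith
      · exact absurd h hne

/-- if `g = h·diag(λ,1/λ)·h⁻¹ ∈ SL(2,ℝ)` with `λ < -1` and `a ∈ SL(2,ℝ)` with
`(h⁻¹ a h)₁₁ ≠ 0`, then eventually `g^{2n} a` and `g^{2n+1} a` both have unique real maximal
eigenvalues of opposite signs; in particular some `g^m a` has a negative maximal eigenvalue. -/
theorem stmt_5 (g a h : Matrix (Fin 2) (Fin 2) ℝ) (lam : ℝ)
    (hg : g.det = 1) (ha : a.det = 1) (hh : IsUnit h)
    (hlam : lam < -1)
    (hconj : g = h * Matrix.diagonal ![lam, lam⁻¹] * h⁻¹)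
    (hc0 : (h⁻¹ * a * h) 0 0 ≠ 0) :
    (∃ N : ℕ, ∀ n ≥ N, ∃ L₁ L₂ : ℝ,
      IsTopEig (g ^ (2 * n) * a) L₁ ∧ IsTopEig (g ^ (2 * n + 1) * a) L₂ ∧ L₁ * L₂ < 0) ∧
    ∃ (m : ℕ) (L : ℝ), L < 0 ∧ IsTopEig (g ^ m * a) L := by
  have hdu : IsUnit h.det := (Matrix.isUnit_iff_isUnit_det h).mp hh
  have hinv : h⁻¹ * h = 1 := Matrix.nonsing_inv_mul h hdu
  have hinv' : h * h⁻¹ = 1 := Matrix.mul_nonsing_inv h hdu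
  set D := Matrix.diagonal ![lam, lam⁻¹] with hD
  set c := (h⁻¹ * a * h) 0 0 with hc
  set d := (h⁻¹ * a * h) 1 1 with hd
  have gpow : ∀ n : ℕ, g ^ n = h * D ^ n * h⁻¹ := by
    intro n
    induction n with
    | zero => simp [hinv']
    | succ n ih =>
      rw [pow_succ, ih, hconj, pow_succ]
      simp only [← Matrix.mul_assoc]
      rw [Matrix.mul_assoc (h * D ^ n) h⁻¹ h, hinv, mul_one]
  have hdet : ∀ n : ℕ, (g ^ n * a).det = 1 := by
    intro n; simp [Matrix.det_mul, Matrix.det_pow, hg, ha]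
  have tr : ∀ n : ℕ, (g ^ n * a).trace = lam ^ n * c + (lam⁻¹) ^ n * d := by
    intro n
    rw [gpow n, show h * D ^ n * h⁻¹ * a = h * (D ^ n * h⁻¹ * a) from by
        simp only [Matrix.mul_assoc],
      Matrix.trace_mul_comm,
      show D ^ n * h⁻¹ * a * h = D ^ n * (h⁻¹ * a * h) from by simp only [Matrix.mul_assoc]]
    rw [hD, Matrix.diagonal_pow, Matrix.trace_fin_two, Matrix.diagonal_mul,
      Matrix.diagonal_mul]
    simp [hc, hd]
  have hL : 1 < |lam| := by rw [abs_of_neg (by linarith : lam < 0)]; linarith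
  have hcpos : 0 < |c| := abs_pos.2 hc0
  obtain ⟨k, hk⟩ := pow_unbounded_of_one_lt ((2 + |d|) / |c|) hL
  have key : ∀ m : ℕ, k ≤ m → 2 + |d| < |lam| ^ m * |c| := by
    intro m hm
    have hmono : |lam| ^ k ≤ |lam| ^ m := pow_le_pow_right₀ (le_of_lt hL) hm
    calc 2 + |d| = ((2 + |d|) / |c|) * |c| := by field_simp
    _ < |lam| ^ k * |c| := mul_lt_mul_of_pos_right hk hcpos
    _ ≤ |lam| ^ m * |c| := mul_le_mul_of_nonneg_right hmono (abs_nonneg c)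
  have step : ∀ m : ℕ, k ≤ m →
      2 < |(g ^ m * a).trace| ∧ 0 < (g ^ m * a).trace * (lam ^ m * c) := by
    intro m hm
    rw [tr m]
    have he : |(lam⁻¹) ^ m * d| ≤ |d| := by
      rw [abs_mul, abs_pow, abs_inv]
      have h1 : |lam|⁻¹ ^ m ≤ 1 :=
        pow_le_one₀ (inv_nonneg.2 (abs_nonneg lam)) (inv_le_one_of_one_le₀ (le_of_lt hL))
      nlinarith [abs_nonneg d, abs_nonneg ((lam : ℝ))]
    have hu : |lam ^ m * c| = |lam| ^ m * |c| := by rw [abs_mul, abs_pow]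
    exact sign_trace_lemma _ _ (by rw [hu]; linarith [key m hm, he])
  have main : ∀ n : ℕ, k ≤ n → ∃ L₁ L₂ : ℝ,
      IsTopEig (g ^ (2 * n) * a) L₁ ∧ IsTopEig (g ^ (2 * n + 1) * a) L₂ ∧ L₁ * L₂ < 0 := by
    intro n hn
    have h1 := step (2 * n) (by omega)
    have h2 := step (2 * n + 1) (by omega)
    obtain ⟨L₁, hT1, hS1⟩ := core _ (hdet (2 * n)) h1.1
    obtain ⟨L₂, hT2, hS2⟩ := core _ (hdet (2 * n + 1)) h2.1
    refine ⟨L₁, L₂, hT1, hT2, ?_⟩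
    have hc2 : 0 < c ^ 2 := by nlinarith [abs_pos.mpr hc0, sq_abs c]
    have hodd : (lam ^ (2 * n) * c) * (lam ^ (2 * n + 1) * c) < 0 := by
      have heq : lam ^ (2 * n) * c * (lam ^ (2 * n + 1) * c) = lam ^ (4 * n + 1) * c ^ 2 := by
        rw [show 4 * n + 1 = (2 * n) + (2 * n + 1) by ring, pow_add]; ring
      rw [heq]
      exact mul_neg_of_neg_of_pos (Odd.pow_neg ⟨2 * n, by ring⟩ (by linarith)) hc2
    have ht12 : (g ^ (2 * n) * a).trace * (g ^ (2 * n + 1) * a).trace < 0 :=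
      sign_mul_lemma _ _ _ _ h1.2 h2.2 hodd
    exact sign_mul_lemma _ _ _ _ hS1 hS2 ht12
  constructor
  · exact ⟨k, fun n hn => main n hn⟩
  · obtain ⟨L₁, L₂, hT1, hT2, hprod⟩ := main k le_rfl
    rcases lt_trichotomy L₁ 0 with h1 | h1 | h1
    · exact ⟨2 * k, L₁, h1, hT1⟩
    · exfalso; rw [h1] at hprod; simp at hprod
    · exact ⟨2 * k + 1, L₂, by nlinarith, hT2⟩
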